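/- arXiv:1912.09468 — 2 statements merged into one kernel-verified Lean document; each statement's English description precedes it below -/
import Mathlib

section
/- Let γ > 0, σ > 0 and μ, a ∈ ℝ, and set μ_A = μ − σ²/γ and μ_B = μ + σ²/γ. Then ∫_ℝ exp(−|w−a|/γ) · φ_{μ,σ}(w) dw = exp((σ² + 2γ(a−μ))/(2γ²)) · Φ((μ_A − a)/σ) + exp((σ² − 2γ(a−μ))/(2γ²)) · Φ((a − μ_B)/σ). -/
open MeasureTheory Real

/-- Standard normal cumulative distribution function. -/
noncomputable def Phi (t : ℝ) : ℝ :=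
  ∫ u in Set.Iic t, (Real.sqrt (2 * Real.pi))⁻¹ * Real.exp (-u ^ 2 / 2)

/-- Normal density with mean μ and standard deviation σ. -/
noncomputable def normalPDF (μ σ x : ℝ) : ℝ :=
  (σ * Real.sqrt (2 * Real.pi))⁻¹ * Real.exp (-(x - μ) ^ 2 / (2 * σ ^ 2))

lemma integrable_normalPDF (m σ : ℝ) (hσ : 0 < σ) : Integrable (normalPDF m σ) := by
  have hb : (0:ℝ) < (2 * σ ^ 2)⁻¹ := by positivity
  have h := ((integrable_exp_neg_mul_sq hb).comp_sub_right m).const_mul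
    (σ * Real.sqrt (2 * Real.pi))⁻¹
  refine h.congr (Filter.Eventually.of_forall fun x => ?_)
  unfold normalPDF
  show (σ * Real.sqrt (2 * Real.pi))⁻¹ * Real.exp (-(2 * σ ^ 2)⁻¹ * (x - m) ^ 2) = _
  rw [show -(2 * σ ^ 2)⁻¹ * (x - m) ^ 2 = -(x - m) ^ 2 / (2 * σ ^ 2) by
    rw [div_eq_mul_inv]; ring]

lemma setIntegral_normalPDF_Iic (m σ b : ℝ) (hσ : 0 < σ) :
    ∫ w in Set.Iic b, normalPDF m σ w = Phi ((b - m) / σ) := by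
  set g : ℝ → ℝ := (Set.Iic ((b - m) / σ)).indicator
    (fun u => (Real.sqrt (2 * Real.pi))⁻¹ * Real.exp (-u ^ 2 / 2)) with hg
  have h1 : ∀ w, (Set.Iic b).indicator (normalPDF m σ) w = σ⁻¹ * g ((w - m) / σ) := by
    intro w
    have hmem : (w - m) / σ ∈ Set.Iic ((b - m) / σ) ↔ w ∈ Set.Iic b := by
      simp only [Set.mem_Iic]
      rw [div_le_div_iff_of_pos_right hσ]
      constructor <;> intro h <;> linarith
    by_cases hw : w ∈ Set.Iic b
    · rw [Set.indicator_of_mem hw, hg, Set.indicator_of_mem (hmem.mpr hw)]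
      unfold normalPDF
      rw [mul_inv]
      have : -((w - m) / σ) ^ 2 / 2 = -(w - m) ^ 2 / (2 * σ ^ 2) := by
        rw [div_pow, ← neg_div, div_div, mul_comm (σ ^ 2) 2]
      rw [this]; ring
    · rw [Set.indicator_of_notMem hw, hg,
        Set.indicator_of_notMem (fun h => hw (hmem.mp h))]
      ring
  calc ∫ w in Set.Iic b, normalPDF m σ w
      = ∫ w, (Set.Iic b).indicator (normalPDF m σ) w :=
        (integral_indicator measurableSet_Iic).symm
    _ = ∫ w, σ⁻¹ * g ((w - m) / σ) := by simp_rw [h1]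
    _ = σ⁻¹ * ∫ w, g ((w - m) / σ) := integral_const_mul _ _
    _ = σ⁻¹ * ∫ x, g (x / σ) := by
        rw [show (fun w => g ((w - m) / σ)) = fun w => (fun x => g (x / σ)) (w - m) from rfl]
        rw [integral_sub_right_eq_self (fun x => g (x / σ)) m]
    _ = σ⁻¹ * (|σ| • ∫ u, g u) := by rw [Measure.integral_comp_div g σ]
    _ = ∫ u, g u := by
        rw [abs_of_pos hσ, smul_eq_mul, ← mul_assoc, inv_mul_cancel₀ hσ.ne', one_mul]
    _ = Phi ((b - m) / σ) := by
        rw [hg, integral_indicator measurableSet_Iic]; rfl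

lemma setIntegral_normalPDF_Ici (m σ b : ℝ) (hσ : 0 < σ) :
    ∫ w in Set.Ici b, normalPDF m σ w = Phi ((m - b) / σ) := by
  set g : ℝ → ℝ := (Set.Iic ((m - b) / σ)).indicator
    (fun u => (Real.sqrt (2 * Real.pi))⁻¹ * Real.exp (-u ^ 2 / 2)) with hg
  have h1 : ∀ w, (Set.Ici b).indicator (normalPDF m σ) w = σ⁻¹ * g ((w - m) / -σ) := by
    intro w
    have hval : (w - m) / -σ = (m - w) / σ := by ring
    have hmem : (w - m) / -σ ∈ Set.Iic ((m - b) / σ) ↔ w ∈ Set.Ici b := by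
      rw [hval]
      simp only [Set.mem_Iic, Set.mem_Ici]
      rw [div_le_div_iff_of_pos_right hσ]
      constructor <;> intro h <;> linarith
    by_cases hw : w ∈ Set.Ici b
    · rw [Set.indicator_of_mem hw, hg, Set.indicator_of_mem (hmem.mpr hw)]
      unfold normalPDF
      rw [mul_inv, hval]
      have : -((m - w) / σ) ^ 2 / 2 = -(w - m) ^ 2 / (2 * σ ^ 2) := by
        rw [div_pow, show (m - w) ^ 2 = (w - m) ^ 2 by ring,
          ← neg_div, div_div, mul_comm (σ ^ 2) 2]
      rw [this]; ring
    · rw [Set.indicator_of_notMem hw, hg,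
        Set.indicator_of_notMem (fun h => hw (hmem.mp h))]
      ring
  calc ∫ w in Set.Ici b, normalPDF m σ w
      = ∫ w, (Set.Ici b).indicator (normalPDF m σ) w :=
        (integral_indicator measurableSet_Ici).symm
    _ = ∫ w, σ⁻¹ * g ((w - m) / -σ) := by simp_rw [h1]
    _ = σ⁻¹ * ∫ w, g ((w - m) / -σ) := integral_const_mul _ _
    _ = σ⁻¹ * ∫ x, g (x / -σ) := by
        rw [show (fun w => g ((w - m) / -σ)) = fun w => (fun x => g (x / -σ)) (w - m) from rfl]
        rw [integral_sub_right_eq_self (fun x => g (x / -σ)) m]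
    _ = σ⁻¹ * (|(-σ)| • ∫ u, g u) := by rw [Measure.integral_comp_div g (-σ)]
    _ = ∫ u, g u := by
        rw [abs_neg, abs_of_pos hσ, smul_eq_mul, ← mul_assoc, inv_mul_cancel₀ hσ.ne', one_mul]
    _ = Phi ((m - b) / σ) := by
        rw [hg, integral_indicator measurableSet_Iic]; rfl

theorem integral_expKernel_mul_normalPDF (γ σ μ a μA μB : ℝ)
    (hγ : 0 < γ) (hσ : 0 < σ)
    (hμA : μA = μ - σ ^ 2 / γ) (hμB : μB = μ + σ ^ 2 / γ) :
    ∫ w : ℝ, Real.exp (-|w - a| / γ) * normalPDF μ σ w =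
      Real.exp ((σ ^ 2 + 2 * γ * (a - μ)) / (2 * γ ^ 2)) * Phi ((μA - a) / σ) +
        Real.exp ((σ ^ 2 - 2 * γ * (a - μ)) / (2 * γ ^ 2)) * Phi ((a - μB) / σ) := by
  have hpdf_nonneg : ∀ m w, 0 ≤ normalPDF m σ w := fun m w => by
    unfold normalPDF; positivity
  have hcont : Continuous fun w => Real.exp (-|w - a| / γ) * normalPDF μ σ w := by
    unfold normalPDF; fun_prop
  have hf : Integrable fun w => Real.exp (-|w - a| / γ) * normalPDF μ σ w := by
    refine (integrable_normalPDF μ σ hσ).mono' hcont.aestronglyMeasurable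
      (Filter.Eventually.of_forall fun w => ?_)
    rw [Real.norm_eq_abs, abs_of_nonneg (mul_nonneg (Real.exp_nonneg _) (hpdf_nonneg μ w))]
    have h1 : Real.exp (-|w - a| / γ) ≤ 1 := by
      rw [Real.exp_le_one_iff]
      apply div_nonpos_of_nonpos_of_nonneg (neg_nonpos.mpr (abs_nonneg _)) hγ.le
    calc Real.exp (-|w - a| / γ) * normalPDF μ σ w
        ≤ 1 * normalPDF μ σ w := by
          apply mul_le_mul_of_nonneg_right h1 (hpdf_nonneg μ w)
      _ = normalPDF μ σ w := one_mul _
  rw [← intervalIntegral.integral_Iic_add_Ioi hf.integrableOn hf.integrableOn (b := a)]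
  have hIic : ∫ w in Set.Iic a, Real.exp (-|w - a| / γ) * normalPDF μ σ w =
      Real.exp ((σ ^ 2 - 2 * γ * (a - μ)) / (2 * γ ^ 2)) * Phi ((a - μB) / σ) := by
    rw [show ∫ w in Set.Iic a, Real.exp (-|w - a| / γ) * normalPDF μ σ w =
        ∫ w in Set.Iic a,
          Real.exp ((σ ^ 2 - 2 * γ * (a - μ)) / (2 * γ ^ 2)) * normalPDF μB σ w from
      setIntegral_congr_fun measurableSet_Iic fun w hw => ?_]
    · rw [integral_const_mul, setIntegral_normalPDF_Iic μB σ a hσ]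
    · have habs : |w - a| = a - w := by
        rw [abs_of_nonpos (by simp only [Set.mem_Iic] at hw; linarith)]; ring
      have hexp : -(a - w) / γ + -(w - μ) ^ 2 / (2 * σ ^ 2) =
          (σ ^ 2 - 2 * γ * (a - μ)) / (2 * γ ^ 2) + -(w - μB) ^ 2 / (2 * σ ^ 2) := by
        subst hμB
        field_simp
        ring
      unfold normalPDF
      rw [habs]
      calc Real.exp (-(a - w) / γ) *
            ((σ * Real.sqrt (2 * Real.pi))⁻¹ * Real.exp (-(w - μ) ^ 2 / (2 * σ ^ 2)))
          = (σ * Real.sqrt (2 * Real.pi))⁻¹ *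
            Real.exp (-(a - w) / γ + -(w - μ) ^ 2 / (2 * σ ^ 2)) := by
            rw [Real.exp_add]; ring
        _ = (σ * Real.sqrt (2 * Real.pi))⁻¹ *
            Real.exp ((σ ^ 2 - 2 * γ * (a - μ)) / (2 * γ ^ 2) + -(w - μB) ^ 2 / (2 * σ ^ 2)) := by
            rw [hexp]
        _ = Real.exp ((σ ^ 2 - 2 * γ * (a - μ)) / (2 * γ ^ 2)) *
            ((σ * Real.sqrt (2 * Real.pi))⁻¹ * Real.exp (-(w - μB) ^ 2 / (2 * σ ^ 2))) := by
            rw [Real.exp_add]; ring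
  have hIoi : ∫ w in Set.Ioi a, Real.exp (-|w - a| / γ) * normalPDF μ σ w =
      Real.exp ((σ ^ 2 + 2 * γ * (a - μ)) / (2 * γ ^ 2)) * Phi ((μA - a) / σ) := by
    rw [show ∫ w in Set.Ioi a, Real.exp (-|w - a| / γ) * normalPDF μ σ w =
        ∫ w in Set.Ioi a,
          Real.exp ((σ ^ 2 + 2 * γ * (a - μ)) / (2 * γ ^ 2)) * normalPDF μA σ w from
      setIntegral_congr_fun measurableSet_Ioi fun w hw => ?_]
    · rw [integral_const_mul, ← integral_Ici_eq_integral_Ioi,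
        setIntegral_normalPDF_Ici μA σ a hσ]
    · have habs : |w - a| = w - a := by
        rw [abs_of_nonneg (by simp only [Set.mem_Ioi] at hw; linarith)]
      have hexp : -(w - a) / γ + -(w - μ) ^ 2 / (2 * σ ^ 2) =
          (σ ^ 2 + 2 * γ * (a - μ)) / (2 * γ ^ 2) + -(w - μA) ^ 2 / (2 * σ ^ 2) := by
        subst hμA
        field_simp
        ring
      unfold normalPDF
      rw [habs]
      calc Real.exp (-(w - a) / γ) *
            ((σ * Real.sqrt (2 * Real.pi))⁻¹ * Real.exp (-(w - μ) ^ 2 / (2 * σ ^ 2)))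
          = (σ * Real.sqrt (2 * Real.pi))⁻¹ *
            Real.exp (-(w - a) / γ + -(w - μ) ^ 2 / (2 * σ ^ 2)) := by
            rw [Real.exp_add]; ring
        _ = (σ * Real.sqrt (2 * Real.pi))⁻¹ *
            Real.exp ((σ ^ 2 + 2 * γ * (a - μ)) / (2 * γ ^ 2) + -(w - μA) ^ 2 / (2 * σ ^ 2)) := by
            rw [hexp]
        _ = Real.exp ((σ ^ 2 + 2 * γ * (a - μ)) / (2 * γ ^ 2)) *
            ((σ * Real.sqrt (2 * Real.pi))⁻¹ * Real.exp (-(w - μA) ^ 2 / (2 * σ ^ 2))) := by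
            rw [Real.exp_add]; ring
  rw [hIic, hIoi]
  ring
end

section
/- Let γ > 0, σ > 0 and μ, a ∈ ℝ, and set μ_A = μ − √3·σ²/γ and μ_B = μ + √3·σ²/γ. Then ∫_ℝ w · (1 + √3·|w−a|/γ) · exp(−√3·|w−a|/γ) · φ_{μ,σ}(w) dw = exp((3σ² + 2√3·γ(a−μ))/(2γ²)) · (((1 − √3·a/γ)·μ_A + (√3/γ)·(μ_A² + σ²)) · Φ((μ_A − a)/σ) + ((1 − √3·a/γ) + (√3/γ)·(μ_A + a)) · (σ/√(2π)) · exp(−(a−μ_A)²/(2σ²))) − exp((3σ² − 2√3·γ(a−μ))/(2γ²)) · ((−(1 + √3·a/γ)·μ_B + (√3/γ)·(μ_B² + σ²)) · Φ((a − μ_B)/σ) + ((1 + √3·a/γ) − (√3/γ)·(μ_B + a)) · (σ/√(2π)) · exp(−(a−μ_B)²/(2σ²))). -/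
/-!
On either side of `a` the Matérn factor is an affine function of `w` times `exp (± √3 w / γ)`,
and multiplying the normal density by `exp (c w)` only shifts its mean to `μ + c σ²`, up to a
constant factor. The integral therefore splits into truncated first and second moments of the
normal laws with means `μ_B` (on `w ≤ a`) and `μ_A` (on `w > a`). On `Iic t` these follow from
`φ' = -(w - m) / σ² · φ` by the fundamental theorem of calculus, giving `Φ` and the density
at `t`; the reflection `w ↦ -w` turns the moments on `Ioi t` into moments on `Iic (-t)`.
-/

open MeasureTheory Real

open Set Filter Topology

section ChangeOfVariables

variable {E : Type*} [NormedAddCommGroup E] [NormedSpace ℝ E]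

theorem integral_comp_add_right_Iic (f : ℝ → E) (a c : ℝ) :
    ∫ x in Iic a, f (x + c) = ∫ x in Iic (a + c), f x := by
  have h := (measurePreserving_add_right (volume : Measure ℝ) c).setIntegral_preimage_emb
    (measurableEmbedding_addRight c) f (Iic (a + c))
  rwa [show (· + c) ⁻¹' Iic (a + c) = Iic a by ext x; simp] at h

theorem integral_comp_mul_left_Iic (g : ℝ → E) (a : ℝ) {b : ℝ} (hb : 0 < b) :
    ∫ x in Iic a, g (b * x) = b⁻¹ • ∫ x in Iic (b * a), g x := by
  have e1 := integral_comp_neg_Ioi (-a) (fun x => g (b * x))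
  have e2 := integral_comp_mul_left_Ioi (fun y => g (-y)) (-a) hb
  have e3 := integral_comp_neg_Ioi (b * -a) g
  simp only [neg_neg, mul_neg] at e1 e2 e3
  rw [← e1, e2, e3]

end ChangeOfVariables

section NormalPDF

variable {m σ : ℝ}

theorem normalPDF_neg (m σ x : ℝ) : normalPDF m σ (-x) = normalPDF (-m) σ x := by
  rw [normalPDF, normalPDF, show (-x - m) ^ 2 = (x - -m) ^ 2 by ring]

theorem normalPDF_eq_mul_exp (m σ x : ℝ) :
    normalPDF m σ x = (σ * √(2 * π))⁻¹ * exp (-(2 * σ ^ 2)⁻¹ * (x - m) ^ 2) := by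
  rw [normalPDF, neg_div, div_eq_inv_mul, neg_mul]

theorem sq_mul_normalPDF (hσ : σ ≠ 0) (t : ℝ) :
    σ ^ 2 * normalPDF m σ t = σ / √(2 * π) * exp (-(t - m) ^ 2 / (2 * σ ^ 2)) := by
  unfold normalPDF
  field_simp

theorem exp_mul_mul_normalPDF (c m σ x : ℝ) :
    exp (c * x) * normalPDF m σ x =
      exp (c * m + c ^ 2 * σ ^ 2 / 2) * normalPDF (m + c * σ ^ 2) σ x := by
  rcases eq_or_ne σ 0 with rfl | hσ
  · simp [normalPDF]
  unfold normalPDF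
  rw [mul_left_comm, ← exp_add, mul_left_comm, ← exp_add]
  congr 2
  field_simp
  ring

theorem hasDerivAt_normalPDF (m σ w : ℝ) :
    HasDerivAt (normalPDF m σ) (-(w - m) / σ ^ 2 * normalPDF m σ w) w := by
  have h := ((((hasDerivAt_id w).sub_const m).pow 2).neg.div_const (2 * σ ^ 2)).exp.const_mul
    (σ * √(2 * π))⁻¹
  refine HasDerivAt.congr_deriv (f := normalPDF m σ) h ?_
  simp only [normalPDF, id, Pi.neg_apply, Pi.pow_apply]
  rcases eq_or_ne σ 0 with rfl | hσ
  · simp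
  field_simp
  ring

theorem integrable_sub_pow_mul_normalPDF (hσ : σ ≠ 0) (k : ℕ) :
    Integrable fun w => (w - m) ^ k * normalPDF m σ w := by
  have hb : 0 < (2 * σ ^ 2)⁻¹ := by positivity
  have hk : (-1 : ℝ) < k := by linarith [k.cast_nonneg (α := ℝ)]
  have h := ((integrable_rpow_mul_exp_neg_mul_sq hb hk).comp_sub_right m).const_mul
    (σ * √(2 * π))⁻¹
  refine h.congr (.of_forall fun w => ?_)
  simp only [normalPDF_eq_mul_exp, rpow_natCast]
  ring

theorem integrable_pow_mul_normalPDF (hσ : σ ≠ 0) (k : ℕ) :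
    Integrable fun w => w ^ k * normalPDF m σ w := by
  have h := integrable_finsetSum (Finset.range (k + 1)) fun i _ =>
    (integrable_sub_pow_mul_normalPDF (m := m) hσ i).mul_const (m ^ (k - i) * k.choose i)
  refine h.congr (.of_forall fun w => ?_)
  have hbinom := add_pow (w - m) m k
  rw [sub_add_cancel] at hbinom
  beta_reduce
  rw [hbinom, Finset.sum_mul]
  exact Finset.sum_congr rfl fun i _ => by ring

theorem integrable_id_mul_affine_mul_normalPDF (hσ : σ ≠ 0) (α β : ℝ) :
    Integrable fun w => w * (α + β * w) * normalPDF m σ w :=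
  (((integrable_pow_mul_normalPDF hσ 1).const_mul α).add
    ((integrable_pow_mul_normalPDF hσ 2).const_mul β)).congr
    (.of_forall fun w => by simp only [Pi.add_apply]; ring)

theorem tendsto_sub_pow_mul_normalPDF_atBot (hσ : σ ≠ 0) (k : ℕ) :
    Tendsto (fun w => (w - m) ^ k * normalPDF m σ w) atBot (𝓝 0) := by
  have hb : 0 < (2 * σ ^ 2)⁻¹ := by positivity
  have h := ((tendsto_rpow_abs_mul_exp_neg_mul_sq_cocompact hb k).comp
    ((tendsto_atBot_add_const_right _ (-m) tendsto_id).mono_right atBot_le_cocompact)).const_mul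
    |(σ * √(2 * π))⁻¹|
  rw [mul_zero] at h
  refine squeeze_zero_norm (fun w => ?_) h
  simp only [Function.comp_apply, normalPDF_eq_mul_exp, ← sub_eq_add_neg, id, rpow_natCast,
    norm_mul, norm_pow, norm_eq_abs, abs_of_pos (exp_pos _)]
  exact le_of_eq (by ring)

theorem setIntegral_Iic_normalPDF (hσ : 0 < σ) (t : ℝ) :
    ∫ w in Iic t, normalPDF m σ w = Phi ((t - m) / σ) := by
  have hshift := integral_comp_add_right_Iic (normalPDF m σ) (t - m) m
  have hscale : ∀ x, normalPDF m σ (x + m) =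
      σ⁻¹ * ((√(2 * π))⁻¹ * exp (-(σ⁻¹ * x) ^ 2 / 2)) := fun x => by
    rw [normalPDF, add_sub_cancel_right, mul_inv, mul_assoc]
    field_simp
  rw [sub_add_cancel] at hshift
  rw [← hshift]
  simp only [hscale]
  rw [integral_const_mul,
    integral_comp_mul_left_Iic (fun u => (√(2 * π))⁻¹ * exp (-u ^ 2 / 2)) _ (inv_pos.2 hσ),
    inv_inv, smul_eq_mul, ← mul_assoc, inv_mul_cancel₀ hσ.ne', one_mul, Phi, mul_comm,
    ← div_eq_mul_inv]

theorem setIntegral_Iic_sub_mul_normalPDF (hσ : σ ≠ 0) (t : ℝ) :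
    ∫ w in Iic t, (w - m) * normalPDF m σ w = -(σ ^ 2 * normalPDF m σ t) := by
  have hderiv : ∀ x ∈ Iic t,
      HasDerivAt (fun w => -σ ^ 2 * normalPDF m σ w) ((x - m) * normalPDF m σ x) x :=
    fun x _ => ((hasDerivAt_normalPDF m σ x).const_mul _).congr_deriv (by field_simp)
  have hlim : Tendsto (fun w => -σ ^ 2 * normalPDF m σ w) atBot (𝓝 0) := by
    simpa using (tendsto_sub_pow_mul_normalPDF_atBot (m := m) hσ 0).const_mul (-σ ^ 2)
  rw [integral_Iic_of_hasDerivAt_of_tendsto' hderiv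
    (by simpa using (integrable_sub_pow_mul_normalPDF hσ 1).integrableOn) hlim]
  ring

theorem setIntegral_Iic_sub_sq_mul_normalPDF (hσ : 0 < σ) (t : ℝ) :
    ∫ w in Iic t, (w - m) ^ 2 * normalPDF m σ w =
      σ ^ 2 * (Phi ((t - m) / σ) - (t - m) * normalPDF m σ t) := by
  have hderiv : ∀ x ∈ Iic t, HasDerivAt (fun w => -σ ^ 2 * ((w - m) * normalPDF m σ w))
      ((x - m) ^ 2 * normalPDF m σ x - σ ^ 2 * normalPDF m σ x) x := fun x _ =>
    ((((hasDerivAt_id x).sub_const m).mul (hasDerivAt_normalPDF m σ x)).const_mul _).congr_deriv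
      (by simp only [id]; field_simp; ring)
  have hlim : Tendsto (fun w => -σ ^ 2 * ((w - m) * normalPDF m σ w)) atBot (𝓝 0) := by
    simpa using (tendsto_sub_pow_mul_normalPDF_atBot (m := m) hσ.ne' 1).const_mul (-σ ^ 2)
  have hint := (integrable_sub_pow_mul_normalPDF (m := m) hσ.ne' 2).integrableOn (s := Iic t)
  have hint₀ := ((integrable_sub_pow_mul_normalPDF (m := m) hσ.ne' 0).const_mul
    (σ ^ 2)).integrableOn (s := Iic t)
  simp only [pow_zero, one_mul] at hint₀
  have h := integral_Iic_of_hasDerivAt_of_tendsto' hderiv (hint.sub hint₀) hlim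
  rw [integral_sub hint hint₀, integral_const_mul, setIntegral_Iic_normalPDF hσ] at h
  linear_combination h

theorem setIntegral_Iic_id_mul_affine_mul_normalPDF (hσ : 0 < σ) (α β t : ℝ) :
    ∫ w in Iic t, w * (α + β * w) * normalPDF m σ w =
      (α * m + β * (m ^ 2 + σ ^ 2)) * Phi ((t - m) / σ) -
        (α + β * (t + m)) * (σ / √(2 * π)) * exp (-(t - m) ^ 2 / (2 * σ ^ 2)) := by
  have hint (k : ℕ) (c : ℝ) :
      IntegrableOn (fun w => c * ((w - m) ^ k * normalPDF m σ w)) (Iic t) :=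
    ((integrable_sub_pow_mul_normalPDF hσ.ne' k).const_mul c).integrableOn
  have hdecomp : ∀ w, w * (α + β * w) * normalPDF m σ w =
      β * ((w - m) ^ 2 * normalPDF m σ w) +
        ((α + 2 * β * m) * ((w - m) ^ 1 * normalPDF m σ w) +
          (α * m + β * m ^ 2) * ((w - m) ^ 0 * normalPDF m σ w)) := fun w => by ring
  simp only [hdecomp]
  rw [integral_add (hint 2 _) ?_, integral_add (hint 1 _) (hint 0 _)]
  · simp only [integral_const_mul, pow_one, pow_zero, one_mul]
    rw [setIntegral_Iic_sub_sq_mul_normalPDF hσ, setIntegral_Iic_sub_mul_normalPDF hσ.ne',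
      setIntegral_Iic_normalPDF hσ]
    linear_combination -(α + β * (t + m)) * sq_mul_normalPDF (m := m) hσ.ne' t
  · exact (hint 1 _).add (hint 0 _)

theorem setIntegral_Ioi_id_mul_affine_mul_normalPDF (hσ : 0 < σ) (α β t : ℝ) :
    ∫ w in Ioi t, w * (α + β * w) * normalPDF m σ w =
      (α * m + β * (m ^ 2 + σ ^ 2)) * Phi ((m - t) / σ) +
        (α + β * (t + m)) * (σ / √(2 * π)) * exp (-(t - m) ^ 2 / (2 * σ ^ 2)) := by
  have hreflect := integral_comp_neg_Iic (-t) fun w => w * (α + β * w) * normalPDF m σ w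
  have hflip : ∀ w,
      -w * (α + β * -w) * normalPDF m σ (-w) = w * (-α + β * w) * normalPDF (-m) σ w :=
    fun w => by rw [normalPDF_neg]; ring
  rw [neg_neg] at hreflect
  rw [← hreflect]
  simp only [hflip]
  rw [setIntegral_Iic_id_mul_affine_mul_normalPDF hσ, show (-t - -m) / σ = (m - t) / σ by ring,
    show (-t - -m) ^ 2 = (t - m) ^ 2 by ring]
  ring

end NormalPDF

noncomputable def matern15 (γ w a : ℝ) : ℝ :=
  (1 + √3 * |w - a| / γ) * exp (-√3 * |w - a| / γ)

theorem matern15_neg (γ w a : ℝ) : matern15 γ (-w) (-a) = matern15 γ w a := by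
  rw [matern15, matern15, ← abs_neg (-w - -a), neg_sub, sub_neg_eq_add, neg_add_eq_sub]

theorem matern15_mul_normalPDF_of_le {γ w a : ℝ} (hγ : γ ≠ 0) (h : w ≤ a) (μ σ : ℝ) :
    matern15 γ w a * normalPDF μ σ w =
      exp ((3 * σ ^ 2 - 2 * √3 * γ * (a - μ)) / (2 * γ ^ 2)) *
        ((1 + √3 * a / γ) - √3 / γ * w) * normalPDF (μ + √3 * σ ^ 2 / γ) σ w := by
  have htilt := exp_mul_mul_normalPDF (√3 / γ) μ σ w
  have hconst : exp ((3 * σ ^ 2 - 2 * √3 * γ * (a - μ)) / (2 * γ ^ 2)) =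
      exp (-(√3 * a / γ)) * exp (√3 / γ * μ + (√3 / γ) ^ 2 * σ ^ 2 / 2) := by
    rw [← exp_add, div_pow, sq_sqrt zero_le_three]
    congr 1
    field_simp
    ring
  have hdecay : exp (-√3 * |w - a| / γ) = exp (-(√3 * a / γ)) * exp (√3 / γ * w) := by
    rw [abs_of_nonpos (sub_nonpos.2 h), ← exp_add]
    congr 1
    field_simp
    ring
  rw [show μ + √3 / γ * σ ^ 2 = μ + √3 * σ ^ 2 / γ by ring] at htilt
  rw [matern15, hdecay, hconst, abs_of_nonpos (sub_nonpos.2 h)]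
  linear_combination (1 + √3 * -(w - a) / γ) * exp (-(√3 * a / γ)) * htilt

theorem matern15_mul_normalPDF_of_ge {γ w a : ℝ} (hγ : γ ≠ 0) (h : a ≤ w) (μ σ : ℝ) :
    matern15 γ w a * normalPDF μ σ w =
      exp ((3 * σ ^ 2 + 2 * √3 * γ * (a - μ)) / (2 * γ ^ 2)) *
        ((1 - √3 * a / γ) + √3 / γ * w) * normalPDF (μ - √3 * σ ^ 2 / γ) σ w := by
  have hle := matern15_mul_normalPDF_of_le hγ (neg_le_neg h) (-μ) σ
  rw [matern15_neg, normalPDF_neg, normalPDF_neg, neg_neg] at hle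
  rw [hle, show -(-μ + √3 * σ ^ 2 / γ) = μ - √3 * σ ^ 2 / γ by ring]
  ring_nf

theorem integral_id_mul_matern15_mul_normalPDF (γ σ μ a μA μB : ℝ)
    (hγ : 0 < γ) (hσ : 0 < σ)
    (hμA : μA = μ - Real.sqrt 3 * σ ^ 2 / γ) (hμB : μB = μ + Real.sqrt 3 * σ ^ 2 / γ) :
    ∫ w : ℝ, w * ((1 + Real.sqrt 3 * |w - a| / γ) * Real.exp (-(Real.sqrt 3) * |w - a| / γ)) *
        normalPDF μ σ w =
      Real.exp ((3 * σ ^ 2 + 2 * Real.sqrt 3 * γ * (a - μ)) / (2 * γ ^ 2)) *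
        (((1 - Real.sqrt 3 * a / γ) * μA + Real.sqrt 3 / γ * (μA ^ 2 + σ ^ 2)) *
            Phi ((μA - a) / σ) +
          ((1 - Real.sqrt 3 * a / γ) + Real.sqrt 3 / γ * (μA + a)) *
            (σ / Real.sqrt (2 * Real.pi)) * Real.exp (-(a - μA) ^ 2 / (2 * σ ^ 2))) -
      Real.exp ((3 * σ ^ 2 - 2 * Real.sqrt 3 * γ * (a - μ)) / (2 * γ ^ 2)) *
        ((-((1 + Real.sqrt 3 * a / γ) * μB) + Real.sqrt 3 / γ * (μB ^ 2 + σ ^ 2)) *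
            Phi ((a - μB) / σ) +
          ((1 + Real.sqrt 3 * a / γ) - Real.sqrt 3 / γ * (μB + a)) *
            (σ / Real.sqrt (2 * Real.pi)) * Real.exp (-(a - μB) ^ 2 / (2 * σ ^ 2))) := by
  subst hμA hμB
  change ∫ w, w * matern15 γ w a * normalPDF μ σ w = _
  have hleft : ∀ w ∈ Iic a, w * matern15 γ w a * normalPDF μ σ w =
      exp ((3 * σ ^ 2 - 2 * √3 * γ * (a - μ)) / (2 * γ ^ 2)) *
        (w * ((1 + √3 * a / γ) + -(√3 / γ) * w) * normalPDF (μ + √3 * σ ^ 2 / γ) σ w) :=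
    fun w hw => by rw [mul_assoc, matern15_mul_normalPDF_of_le hγ.ne' hw]; ring
  have hright : ∀ w ∈ Ioi a, w * matern15 γ w a * normalPDF μ σ w =
      exp ((3 * σ ^ 2 + 2 * √3 * γ * (a - μ)) / (2 * γ ^ 2)) *
        (w * ((1 - √3 * a / γ) + √3 / γ * w) * normalPDF (μ - √3 * σ ^ 2 / γ) σ w) :=
    fun w hw => by rw [mul_assoc, matern15_mul_normalPDF_of_ge hγ.ne' (le_of_lt hw)]; ring
  have hintL := ((integrable_id_mul_affine_mul_normalPDF hσ.ne' _ _).const_mul _).integrableOn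
    |>.congr_fun (fun w hw => (hleft w hw).symm) measurableSet_Iic
  have hintR := ((integrable_id_mul_affine_mul_normalPDF hσ.ne' _ _).const_mul _).integrableOn
    |>.congr_fun (fun w hw => (hright w hw).symm) measurableSet_Ioi
  rw [← intervalIntegral.integral_Iic_add_Ioi hintL hintR,
    setIntegral_congr_fun measurableSet_Iic hleft, setIntegral_congr_fun measurableSet_Ioi hright,
    integral_const_mul, integral_const_mul,
    setIntegral_Iic_id_mul_affine_mul_normalPDF hσ,
    setIntegral_Ioi_id_mul_affine_mul_normalPDF hσ]
  ring
end
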